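/- arXiv:2010.09779 — 5 statements merged into one kernel-verified Lean document; each statement's English description precedes it below -/
import Mathlib

section
/- Let u, a, b, y be as in the Painlevé II system below, and assume y(x,w) > 0 for all (x,w). For (x,t,r) ∈ ℝ × (0,∞) × ℝ set s = t^(-1/3)·r + t^(-4/3)·x^2, φ_gue(x,t,r) = −t^(-2/3)·u(s)^2, and ψ(x,t,r) = ∂_r^2[ log y(s, t^(-2/3)·x/2) ]. Then ψ satisfies the (r-differentiated) modified KP equation: ∂_r( ∂_t ψ + ψ·∂_r ψ + (1/12)·∂_r^3 ψ + φ_gue·∂_r ψ + ψ·∂_r φ_gue ) + (1/4)·∂_x^2 ψ = 0 at every point of ℝ × (0,∞) × ℝ. -/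
/-- The left-hand side of the (r-differentiated) KP equation
`∂_r(∂_t φ + φ·∂_r φ + (1/12)·∂_r³ φ) + (1/4)·∂_x² φ` for `φ = φ x t r`. -/
noncomputable def kpDiff (φ : ℝ → ℝ → ℝ → ℝ) (x t r : ℝ) : ℝ :=
  deriv (fun r' => deriv (fun t' => φ x t' r') t
      + φ x t r' * deriv (fun s => φ x t s) r'
      + (1/12) * iteratedDeriv 3 (fun s => φ x t s) r') r
    + (1/4) * iteratedDeriv 2 (fun x' => φ x' t r) x

/-- The left-hand side of the (r-differentiated) modified KP equation with coefficient `φ`: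
`∂_r(∂_t ψ + ψ·∂_r ψ + (1/12)·∂_r³ ψ + φ·∂_r ψ + ψ·∂_r φ) + (1/4)·∂_x² ψ`. -/
noncomputable def kpModDiff (φ ψ : ℝ → ℝ → ℝ → ℝ) (x t r : ℝ) : ℝ :=
  deriv (fun r' => deriv (fun t' => ψ x t' r') t
      + ψ x t r' * deriv (fun s => ψ x t s) r'
      + (1/12) * iteratedDeriv 3 (fun s => ψ x t s) r'
      + φ x t r' * deriv (fun s => ψ x t s) r'
      + ψ x t r' * deriv (fun s => φ x t s) r') r
    + (1/4) * iteratedDeriv 2 (fun x' => ψ x' t r) x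


/-!
Write `c = t^(-1/3)`. The function `ψ` is self-similar, `ψ = c² g(c r + c⁴ x², c² x / 2)` with
`g = ∂ₛ² log y`, and substituting this ansatz turns the modified KP expression into `c⁶` times an
expression in `g` and `u` (`reducedKP`) that only involves the point
`(s, w) = (c r + c⁴ x², c² x / 2)`.

To see that this expression vanishes, put `p = a(s,w) a(s,-w) / y`, `m = b(s,w) a(s,-w) / y` and
`n = a(s,w) b(s,-w) / y`. The symmetry `b(s,w) b(s,-w) = a(s,w) a(s,-w)`, which comes from the
exponential relation between `a` and `b`, gives `∂ₛ log y = p`, and `(p, m, n, u, u', s, w)`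
satisfies a closed polynomial ODE system both in `s` and in `w`. So every partial derivative of
`g = ∂ₛ p` is a polynomial in these seven quantities, obtained by applying the two derivations
of the polynomial ring that encode the system; these derivations commute, which gives the
symmetry of mixed partials. The reduced expression becomes an explicit polynomial, which lies in
the ideal generated by `m n - p²` and by the relation expressing `y / y = 1`.
-/

open Real Filter Topology MvPolynomial Function

noncomputable def derivFst (f : ℝ → ℝ → ℝ) (s w : ℝ) : ℝ := deriv (fun s' => f s' w) s

noncomputable def derivSnd (f : ℝ → ℝ → ℝ) (s w : ℝ) : ℝ := deriv (f s) w

section PartialDeriv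

variable {f : ℝ → ℝ → ℝ}

theorem Differentiable.differentiableAt_fst (hf : Differentiable ℝ (uncurry f)) (s w : ℝ) :
    DifferentiableAt ℝ (fun s' => f s' w) s :=
  (hf (s, w)).comp (f := fun s' => (s', w)) s
    (differentiableAt_id.prodMk (differentiableAt_const w))

theorem Differentiable.differentiableAt_snd (hf : Differentiable ℝ (uncurry f)) (s w : ℝ) :
    DifferentiableAt ℝ (f s) w :=
  (hf (s, w)).comp (f := fun w' => (s, w')) w
    ((differentiableAt_const s).prodMk differentiableAt_id)

theorem Differentiable.hasDerivAt_derivFst (hf : Differentiable ℝ (uncurry f)) (s w : ℝ) :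
    HasDerivAt (fun s' => f s' w) (derivFst f s w) s :=
  (hf.differentiableAt_fst s w).hasDerivAt

theorem Differentiable.hasDerivAt_derivSnd (hf : Differentiable ℝ (uncurry f)) (s w : ℝ) :
    HasDerivAt (f s) (derivSnd f s w) w :=
  (hf.differentiableAt_snd s w).hasDerivAt

theorem Differentiable.hasDerivAt_comp₂ (hf : Differentiable ℝ (uncurry f))
    {σ ω : ℝ → ℝ} {σ' ω' t : ℝ} (hσ : HasDerivAt σ σ' t) (hω : HasDerivAt ω ω' t) :
    HasDerivAt (fun t => f (σ t) (ω t))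
      (derivFst f (σ t) (ω t) * σ' + derivSnd f (σ t) (ω t) * ω') t := by
  have hL := (hf (σ t, ω t)).hasFDerivAt
  set L := fderiv ℝ (uncurry f) (σ t, ω t)
  have h₁ : HasDerivAt (fun s => f s (ω t)) (L (1, 0)) (σ t) :=
    hL.comp_hasDerivAt (f := fun s => (s, ω t)) (σ t)
      ((hasDerivAt_id' (σ t)).prodMk (hasDerivAt_const (σ t) (ω t)))
  have h₂ : HasDerivAt (f (σ t)) (L (0, 1)) (ω t) :=
    hL.comp_hasDerivAt (f := fun w => (σ t, w)) (ω t)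
      ((hasDerivAt_const (ω t) (σ t)).prodMk (hasDerivAt_id' (ω t)))
  have hv : ((σ', ω') : ℝ × ℝ) = σ' • ((1 : ℝ), (0 : ℝ)) + ω' • ((0 : ℝ), (1 : ℝ)) := by simp
  refine (hL.comp_hasDerivAt (f := fun t => (σ t, ω t)) t (hσ.prodMk hω)).congr_deriv ?_
  rw [hv, map_add, map_smul, map_smul, derivFst, derivSnd, h₁.deriv, h₂.deriv, smul_eq_mul,
    smul_eq_mul, mul_comm σ', mul_comm ω']

theorem hasDerivAt_comp_affine_fst {w c d r : ℝ}
    (hf : DifferentiableAt ℝ (fun s => f s w) (c * r + d)) :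
    HasDerivAt (fun r => f (c * r + d) w) (derivFst f (c * r + d) w * c) r :=
  hf.hasDerivAt.comp (h := fun r => c * r + d) r
    (((hasDerivAt_id' r).const_mul c).add_const d |>.congr_deriv (mul_one c))

theorem iteratedDeriv_comp_affine_fst {w : ℝ} {k : ℕ}
    (hf : ∀ j < k, ∀ s, DifferentiableAt ℝ (fun s' => derivFst^[j] f s' w) s) (c d r : ℝ) :
    iteratedDeriv k (fun r => f (c * r + d) w) r = c ^ k * derivFst^[k] f (c * r + d) w := by
  induction k generalizing r with
  | zero => simp
  | succ k ih =>
    rw [iteratedDeriv_succ, funext (ih fun j hj => hf j (by omega)),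
      ((hasDerivAt_comp_affine_fst (hf k (by omega) (c * r + d))).const_mul (c ^ k)).deriv,
      Function.iterate_succ_apply']
    ring

end PartialDeriv

noncomputable def scale (t : ℝ) : ℝ := t ^ (-(1:ℝ)/3)

noncomputable def selfSimilar (g : ℝ → ℝ → ℝ) (x t r : ℝ) : ℝ :=
  scale t ^ 2 * g (scale t * r + scale t ^ 4 * x ^ 2) (scale t ^ 2 * x / 2)

noncomputable def reducedKPJet (u u' u'' s w g g₁ g₁₁ g₁₁₁₁ g₂₁ g₂₂ : ℝ) : ℝ :=
  g₁₁₁₁ / 12 + g₁ ^ 2 + g * g₁₁ - u ^ 2 * g₁₁ - 4 * u * u' * g₁ - 2 * (u' ^ 2 + u * u'') * g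
    - g₁ / 2 - s * g₁₁ / 3 + w * g₂₁ / 3 + g₂₂ / 16

noncomputable def reducedKP (u : ℝ → ℝ) (g : ℝ → ℝ → ℝ) (s w : ℝ) : ℝ :=
  reducedKPJet (u s) (deriv u s) (deriv (deriv u) s) s w (g s w) (derivFst g s w)
    (derivFst^[2] g s w) (derivFst^[4] g s w) (derivSnd (derivFst g) s w)
    (derivSnd (derivSnd g) s w)

section Scale

variable {t : ℝ}

theorem scale_pow (ht : 0 ≤ t) (k : ℕ) : scale t ^ k = t ^ (-(k : ℝ) / 3) := by
  rw [scale, ← Real.rpow_natCast, ← Real.rpow_mul ht]; ring_nf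

theorem rpow_neg_two_div_three (ht : 0 ≤ t) : t ^ (-(2:ℝ)/3) = scale t ^ 2 := by
  rw [scale_pow ht]; norm_num

theorem rpow_neg_four_div_three (ht : 0 ≤ t) : t ^ (-(4:ℝ)/3) = scale t ^ 4 := by
  rw [scale_pow ht]; norm_num

theorem hasDerivAt_scale (ht : 0 < t) : HasDerivAt scale (-(scale t ^ 4) / 3) t := by
  refine (Real.hasDerivAt_rpow_const (p := -(1:ℝ)/3) (Or.inl ht.ne')).congr_deriv ?_
  rw [scale_pow ht.le]; ring_nf

end Scale

section SelfSimilar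

variable {g : ℝ → ℝ → ℝ} {x t : ℝ}

theorem hasDerivAt_selfSimilar_t (hg : Differentiable ℝ (uncurry g)) (ht : 0 < t) (r : ℝ) :
    HasDerivAt (fun t => selfSimilar g x t r)
      (-(scale t ^ 4 / 3)
        * (2 * scale t * g (scale t * r + scale t ^ 4 * x ^ 2) (scale t ^ 2 * x / 2)
          + scale t ^ 2 * (derivFst g (scale t * r + scale t ^ 4 * x ^ 2) (scale t ^ 2 * x / 2)
              * (r + 4 * scale t ^ 3 * x ^ 2)
            + derivSnd g (scale t * r + scale t ^ 4 * x ^ 2) (scale t ^ 2 * x / 2)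
              * (scale t * x)))) t := by
  have hc := hasDerivAt_scale ht
  refine ((hc.pow 2).mul (hg.hasDerivAt_comp₂
    ((hc.mul_const r).add ((hc.pow 4).mul_const (x ^ 2)))
    (((hc.pow 2).mul_const x).div_const 2))).congr_deriv ?_
  simp only [Pi.add_apply, Pi.pow_apply]
  push_cast
  ring

theorem iteratedDeriv_selfSimilar_r {k : ℕ}
    (hg : ∀ j < k, Differentiable ℝ (uncurry (derivFst^[j] g))) (r : ℝ) :
    iteratedDeriv k (selfSimilar g x t) r
      = scale t ^ (k + 2)
        * derivFst^[k] g (scale t * r + scale t ^ 4 * x ^ 2) (scale t ^ 2 * x / 2) := by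
  rw [show selfSimilar g x t = fun r => scale t ^ 2 * g (scale t * r + scale t ^ 4 * x ^ 2)
    (scale t ^ 2 * x / 2) from rfl, iteratedDeriv_const_mul_field,
    iteratedDeriv_comp_affine_fst fun j hj s => (hg j hj).differentiableAt_fst s _]
  ring

theorem deriv_selfSimilar_r (hg : Differentiable ℝ (uncurry g)) (r : ℝ) :
    deriv (selfSimilar g x t) r
      = scale t ^ 3 * derivFst g (scale t * r + scale t ^ 4 * x ^ 2) (scale t ^ 2 * x / 2) := by
  rw [← iteratedDeriv_one, iteratedDeriv_selfSimilar_r fun j hj => by rwa [Nat.lt_one_iff.mp hj]]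
  rfl

theorem iteratedDeriv_two_selfSimilar_x (hg : Differentiable ℝ (uncurry g))
    (hg₁ : Differentiable ℝ (uncurry (derivFst g))) (hg₂ : Differentiable ℝ (uncurry (derivSnd g)))
    (r : ℝ) :
    iteratedDeriv 2 (fun x => selfSimilar g x t r) x
      = scale t ^ 2 * ((derivFst^[2] g (scale t * r + scale t ^ 4 * x ^ 2) (scale t ^ 2 * x / 2)
            * (2 * scale t ^ 4 * x)
          + derivSnd (derivFst g) (scale t * r + scale t ^ 4 * x ^ 2) (scale t ^ 2 * x / 2)
            * (scale t ^ 2 / 2)) * (2 * scale t ^ 4 * x)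
        + derivFst g (scale t * r + scale t ^ 4 * x ^ 2) (scale t ^ 2 * x / 2) * (2 * scale t ^ 4)
        + (derivFst (derivSnd g) (scale t * r + scale t ^ 4 * x ^ 2) (scale t ^ 2 * x / 2)
            * (2 * scale t ^ 4 * x)
          + derivSnd (derivSnd g) (scale t * r + scale t ^ 4 * x ^ 2) (scale t ^ 2 * x / 2)
            * (scale t ^ 2 / 2)) * (scale t ^ 2 / 2)) := by
  set c := scale t
  have hσ : ∀ x : ℝ, HasDerivAt (fun x => c * r + c ^ 4 * x ^ 2) (2 * c ^ 4 * x) x := fun x =>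
    (((hasDerivAt_pow 2 x).const_mul (c ^ 4)).const_add (c * r)).congr_deriv (by push_cast; ring)
  have hω : ∀ x : ℝ, HasDerivAt (fun x => c ^ 2 * x / 2) (c ^ 2 / 2) x := fun x =>
    (((hasDerivAt_id' x).const_mul (c ^ 2)).div_const 2).congr_deriv (by ring)
  have h₁ : deriv (fun x => selfSimilar g x t r) = fun x => c ^ 2 *
      (derivFst g (c * r + c ^ 4 * x ^ 2) (c ^ 2 * x / 2) * (2 * c ^ 4 * x)
        + derivSnd g (c * r + c ^ 4 * x ^ 2) (c ^ 2 * x / 2) * (c ^ 2 / 2)) :=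
    funext fun x => ((hg.hasDerivAt_comp₂ (hσ x) (hω x)).const_mul (c ^ 2)).deriv
  rw [iteratedDeriv_succ, iteratedDeriv_one, h₁]
  refine ((((hg₁.hasDerivAt_comp₂ (hσ x) (hω x)).mul
    ((hasDerivAt_id' x).const_mul (2 * c ^ 4))).add
    ((hg₂.hasDerivAt_comp₂ (hσ x) (hω x)).mul_const (c ^ 2 / 2))).const_mul (c ^ 2)).deriv.trans ?_
  rw [Function.iterate_succ_apply', Function.iterate_one]
  ring

end SelfSimilar

theorem kpModDiff_congr {φ φ' ψ ψ' : ℝ → ℝ → ℝ → ℝ} {t : ℝ} (hφ : ∀ x r, φ x t r = φ' x t r)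
    (hψ : ∀ᶠ t' in 𝓝 t, ∀ x r, ψ x t' r = ψ' x t' r) (x r : ℝ) :
    kpModDiff φ ψ x t r = kpModDiff φ' ψ' x t r := by
  have hψt : ∀ r, deriv (fun t => ψ x t r) t = deriv (fun t => ψ' x t r) t := fun r =>
    Filter.EventuallyEq.deriv_eq (hψ.mono fun _ h => h x r)
  have hψ₀ : ∀ x r, ψ x t r = ψ' x t r := hψ.self_of_nhds
  unfold kpModDiff
  simp only [hψt, hψ₀, hφ]

theorem kpModDiff_selfSimilar {u : ℝ → ℝ} {g : ℝ → ℝ → ℝ}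
    (hu : Differentiable ℝ u) (hu' : Differentiable ℝ (deriv u))
    (hg : ∀ k ≤ 3, Differentiable ℝ (uncurry (derivFst^[k] g)))
    (hg₂ : Differentiable ℝ (uncurry (derivSnd g)))
    (hmixed : derivSnd (derivFst g) = derivFst (derivSnd g)) {x t : ℝ} (ht : 0 < t) (r : ℝ) :
    kpModDiff (fun x t r => -(scale t ^ 2) * u (scale t * r + scale t ^ 4 * x ^ 2) ^ 2)
        (selfSimilar g) x t r
      = scale t ^ 6 * reducedKP u g (scale t * r + scale t ^ 4 * x ^ 2) (scale t ^ 2 * x / 2) := by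
  have hg₀ : Differentiable ℝ (uncurry g) := hg 0 (by norm_num)
  have hg₁ : Differentiable ℝ (uncurry (derivFst g)) := hg 1 (by norm_num)
  have hσ : ∀ r : ℝ, HasDerivAt (fun r => scale t * r + scale t ^ 4 * x ^ 2) (scale t) r := fun r =>
    ((hasDerivAt_id' r).const_mul (scale t) |>.add_const _).congr_deriv (mul_one (scale t))
  have hG : ∀ f : ℝ → ℝ → ℝ, Differentiable ℝ (uncurry f) → HasDerivAt
      (fun r => f (scale t * r + scale t ^ 4 * x ^ 2) (scale t ^ 2 * x / 2))
      (derivFst f (scale t * r + scale t ^ 4 * x ^ 2) (scale t ^ 2 * x / 2) * scale t) r :=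
    fun f hf => hasDerivAt_comp_affine_fst (hf.differentiableAt_fst _ _)
  have hU : ∀ r, HasDerivAt (fun r => u (scale t * r + scale t ^ 4 * x ^ 2))
      (deriv u (scale t * r + scale t ^ 4 * x ^ 2) * scale t) r := fun r =>
    (hu _).hasDerivAt.comp r (hσ r)
  have hU' := (hu' _).hasDerivAt.comp r (hσ r)
  have hφ₁ : ∀ r, deriv (fun s => -(scale t ^ 2) * u (scale t * s + scale t ^ 4 * x ^ 2) ^ 2) r
      = -(scale t ^ 2) * (2 * u (scale t * r + scale t ^ 4 * x ^ 2)
        * (deriv u (scale t * r + scale t ^ 4 * x ^ 2) * scale t)) :=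
    fun r => (((hU r).pow 2).const_mul _).deriv.trans (by push_cast; ring)
  unfold kpModDiff
  rw [iteratedDeriv_two_selfSimilar_x hg₀ hg₁ hg₂]
  simp only [(hasDerivAt_selfSimilar_t hg₀ ht _).deriv, deriv_selfSimilar_r hg₀, hφ₁,
    iteratedDeriv_selfSimilar_r (k := 3) (fun j hj => hg j (by omega))]
  simp only [selfSimilar]
  have hg₀' := hG g hg₀
  have hg₁' := hG (derivFst g) hg₁
  have hT := ((hg₀'.const_mul (2 * scale t)).add (((hg₁'.mul ((hasDerivAt_id' r).add_const
    (4 * scale t ^ 3 * x ^ 2))).add ((hG (derivSnd g) hg₂).mul_const (scale t * x))).const_mul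
      (scale t ^ 2))).const_mul (-(scale t ^ 4 / 3))
  have hF := (((hT.add ((hg₀'.const_mul (scale t ^ 2)).mul (hg₁'.const_mul (scale t ^ 3)))).add
    (((hG (derivFst^[3] g) (hg 3 le_rfl)).const_mul (scale t ^ (3 + 2))).const_mul (1 / 12))).add
    ((((hU r).pow 2).const_mul (-(scale t ^ 2))).mul (hg₁'.const_mul (scale t ^ 3)))).add
    ((hg₀'.const_mul (scale t ^ 2)).mul
      ((((hU r).const_mul 2).mul (hU'.mul_const (scale t))).const_mul (-(scale t ^ 2))))
  refine (congrArg (· + _) hF.deriv).trans ?_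
  simp only [reducedKP, reducedKPJet, hmixed, Function.iterate_succ_apply',
    Function.iterate_zero_apply, Pi.mul_apply, Pi.pow_apply, Function.comp_apply]
  ring

theorem Derivation.map_ofNat {R A M : Type*} [CommSemiring R] [CommSemiring A] [Algebra R A]
    [AddCommMonoid M] [Module A M] [Module R M] (D : Derivation R A M) (k : ℕ) [k.AtLeastTwo] :
    D (no_index (OfNat.ofNat k : A)) = 0 := by
  rw [← Nat.cast_ofNat]; exact D.map_natCast k

namespace MvPolynomial

variable {σ : Type*}

theorem hasDerivAt_eval_mkDerivation {S : ℝ → σ → ℝ} {F : σ → MvPolynomial σ ℝ} {s : ℝ}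
    (hS : ∀ i, HasDerivAt (fun s => S s i) (eval (S s) (F i)) s) (P : MvPolynomial σ ℝ) :
    HasDerivAt (fun s => eval (S s) P) (eval (S s) (mkDerivation ℝ F P)) s := by
  induction P using MvPolynomial.induction_on with
  | C a => simpa using hasDerivAt_const s a
  | add P Q hP hQ => simp only [map_add]; exact hP.add hQ
  | mul_X P i hP =>
    simp only [map_mul, eval_X, Derivation.leibniz, mkDerivation_X, smul_eq_mul, map_add]
    exact (hP.mul (hS i)).congr_deriv (by ring)

theorem differentiable_eval {E : Type*} [NormedAddCommGroup E] [NormedSpace ℝ E]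
    {S : E → σ → ℝ} (hS : ∀ i, Differentiable ℝ (fun z => S z i)) (P : MvPolynomial σ ℝ) :
    Differentiable ℝ (fun z => eval (S z) P) := by
  induction P using MvPolynomial.induction_on with
  | C a => simp
  | add P Q hP hQ => simp only [map_add]; exact hP.add hQ
  | mul_X P i hP => simp only [map_mul, eval_X]; exact hP.mul (hS i)

end MvPolynomial

inductive Var | p | m | n | u | u' | s | w

noncomputable def xFlow : Var → MvPolynomial Var ℝ
  | .p => -(X .p * X .p) + X .u * (X .m + X .n)
  | .m => -(X .p * X .m) + 2 * (X .u * X .p) - 2 * (X .w * X .m)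
  | .n => -(X .p * X .n) + 2 * (X .u * X .p) + 2 * (X .w * X .n)
  | .u => X .u'
  | .u' => 2 * (X .u * X .u * X .u) + X .s * X .u
  | .s => 1
  | .w => 0

noncomputable def wFlow : Var → MvPolynomial Var ℝ
  | .p => 2 * ((X .u' - X .u * X .p) * (X .n - X .m)) + 8 * (X .w * X .p * X .p)
      - 4 * (X .w * X .u * (X .m + X .n))
  | .m => 4 * (X .u' * X .p) + 2 * (X .u * X .m * (X .m - X .n)) - 4 * (X .u * X .u * X .m)
      + 8 * (X .w * X .p * X .m) - 8 * (X .w * X .u * X .p) + (8 * (X .w * X .w) - 2 * X .s) * X .m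
  | .n => -(4 * (X .u' * X .p)) + 2 * (X .u * X .n * (X .m - X .n)) + 4 * (X .u * X .u * X .n)
      + 8 * (X .w * X .p * X .n) - 8 * (X .w * X .u * X .p) - (8 * (X .w * X .w) - 2 * X .s) * X .n
  | .u => 0
  | .u' => 0
  | .s => 0
  | .w => 1

noncomputable abbrev Dx : Derivation ℝ (MvPolynomial Var ℝ) (MvPolynomial Var ℝ) :=
  mkDerivation ℝ xFlow

noncomputable abbrev Dw : Derivation ℝ (MvPolynomial Var ℝ) (MvPolynomial Var ℝ) :=
  mkDerivation ℝ wFlow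

theorem Dx_Dw_comm (P : MvPolynomial Var ℝ) : Dx (Dw P) = Dw (Dx P) := by
  have h : ⁅Dx, Dw⁆ = 0 := by
    refine MvPolynomial.derivation_ext fun i => ?_
    cases i <;> simp only [Derivation.commutator_apply, mkDerivation_X, xFlow, wFlow, map_add,
      map_sub, map_neg, map_zero, Derivation.leibniz, smul_eq_mul, Derivation.map_ofNat,
      Derivation.map_one_eq_zero, Derivation.coe_zero, Pi.zero_apply] <;> ring
  simpa [Derivation.commutator_apply, sub_eq_zero] using congrArg (· P) h

theorem reducedKPJet_eval_eq_zero (S : Var → ℝ) (hmn : S .m * S .n = S .p ^ 2)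
    (hY : (2 * S .u ^ 2 + S .s - 4 * S .w ^ 2) * S .p - (S .u' + 2 * S .w * S .u) * S .m
      - (S .u' - 2 * S .w * S .u) * S .n = 1) :
    reducedKPJet (S .u) (S .u') (2 * S .u ^ 3 + S .s * S .u) (S .s) (S .w) (eval S (xFlow .p))
      (eval S (Dx (xFlow .p))) (eval S (Dx (Dx (xFlow .p))))
      (eval S (Dx (Dx (Dx (Dx (xFlow .p)))))) (eval S (Dw (Dx (xFlow .p))))
      (eval S (Dw (Dw (xFlow .p)))) = 0 := by
  simp only [reducedKPJet, map_add, map_sub, map_neg, Derivation.leibniz, mkDerivation_X, xFlow,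
    wFlow, smul_eq_mul, Derivation.map_ofNat, Derivation.map_one_eq_zero, map_mul, eval_X,
    map_ofNat, map_one, map_zero, mul_zero, add_zero, zero_add, sub_zero]
  linear_combination (2 * S .u' ^ 2 + 2 * S .u ^ 2 * S .s + 4 * S .u ^ 4 - 2 * S .n * S .u ^ 3
      - 2 * S .m * S .u ^ 3 - 8 * S .p * S .u * S .u' + 6 * S .p ^ 2 * S .u ^ 2) * hmn
    + (S .n * S .u' / 3 + 2 / 3 * S .n * S .u * S .w + S .m * S .u' / 3
      - 2 / 3 * S .m * S .u * S .w + 4 / 3 * S .p * S .u ^ 2 - 2 * S .p * S .n * S .u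
      - 2 * S .p * S .m * S .u + 2 * S .p ^ 3) * hY

structure BaikRainsSystem (u : ℝ → ℝ) (a b y : ℝ → ℝ → ℝ) : Prop where
  differentiable_u : Differentiable ℝ u
  differentiable_deriv_u : Differentiable ℝ (deriv u)
  painleve : ∀ x, deriv (deriv u) x = 2 * u x ^ 3 + x * u x
  differentiable_a : Differentiable ℝ (uncurry a)
  differentiable_b : Differentiable ℝ (uncurry b)
  deriv_a_fst : ∀ x w, deriv (fun x' => a x' w) x = u x * b x w
  deriv_b_fst : ∀ x w, deriv (fun x' => b x' w) x = u x * a x w - 2 * w * b x w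
  deriv_a_snd : ∀ x w, deriv (fun w' => a x w') w
    = 2 * u x ^ 2 * a x w - (4 * w * u x + 2 * deriv u x) * b x w
  deriv_b_snd : ∀ x w, deriv (fun w' => b x w') w
    = (-(4 * w * u x) + 2 * deriv u x) * a x w + (8 * w ^ 2 - 2 * x - 2 * u x ^ 2) * b x w
  a_eq : ∀ x w, a x w = -b x (-w) * exp (8 * w ^ 3 / 3 - 2 * w * x)
  y_eq : ∀ x w, y x w
    = (2 * u x ^ 2 + x - 4 * w ^ 2) * a x w * a x (-w)
      - (deriv u x + 2 * w * u x) * b x w * a x (-w)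
      - (deriv u x - 2 * w * u x) * a x w * b x (-w)
  y_pos : ∀ x w, 0 < y x w

noncomputable def brState (u : ℝ → ℝ) (a b y : ℝ → ℝ → ℝ) (s w : ℝ) : Var → ℝ
  | .p => a s w * a s (-w) / y s w
  | .m => b s w * a s (-w) / y s w
  | .n => a s w * b s (-w) / y s w
  | .u => u s
  | .u' => deriv u s
  | .s => s
  | .w => w

noncomputable def brEval (u : ℝ → ℝ) (a b y : ℝ → ℝ → ℝ) (P : MvPolynomial Var ℝ)
    (s w : ℝ) : ℝ :=
  eval (brState u a b y s w) P

namespace BaikRainsSystem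

variable {u : ℝ → ℝ} {a b y : ℝ → ℝ → ℝ}

theorem b_mul_b_neg (h : BaikRainsSystem u a b y) (s w : ℝ) :
    b s w * b s (-w) = a s w * a s (-w) := by
  have e : exp (8 * w ^ 3 / 3 - 2 * w * s) * exp (8 * (-w) ^ 3 / 3 - 2 * (-w) * s) = 1 := by
    rw [← exp_add]; ring_nf; exact exp_zero
  have := h.a_eq s (-w)
  rw [neg_neg] at this
  rw [h.a_eq s w, this]
  linear_combination (-(b s w * b s (-w))) * e

theorem hasDerivAt_a_fst (h : BaikRainsSystem u a b y) (s w : ℝ) :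
    HasDerivAt (fun s' => a s' w) (u s * b s w) s :=
  h.deriv_a_fst s w ▸ h.differentiable_a.hasDerivAt_derivFst s w

theorem hasDerivAt_b_fst (h : BaikRainsSystem u a b y) (s w : ℝ) :
    HasDerivAt (fun s' => b s' w) (u s * a s w - 2 * w * b s w) s :=
  h.deriv_b_fst s w ▸ h.differentiable_b.hasDerivAt_derivFst s w

theorem hasDerivAt_a_snd (h : BaikRainsSystem u a b y) (s w : ℝ) :
    HasDerivAt (a s) (2 * u s ^ 2 * a s w - (4 * w * u s + 2 * deriv u s) * b s w) w :=
  h.deriv_a_snd s w ▸ h.differentiable_a.hasDerivAt_derivSnd s w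

theorem hasDerivAt_b_snd (h : BaikRainsSystem u a b y) (s w : ℝ) :
    HasDerivAt (b s) ((-(4 * w * u s) + 2 * deriv u s) * a s w
      + (8 * w ^ 2 - 2 * s - 2 * u s ^ 2) * b s w) w :=
  h.deriv_b_snd s w ▸ h.differentiable_b.hasDerivAt_derivSnd s w

theorem hasDerivAt_a_snd_neg (h : BaikRainsSystem u a b y) (s w : ℝ) :
    HasDerivAt (fun w' => a s (-w'))
      (-(2 * u s ^ 2 * a s (-w) + (4 * w * u s - 2 * deriv u s) * b s (-w))) w :=
  ((h.hasDerivAt_a_snd s (-w)).comp w (hasDerivAt_neg w)).congr_deriv (by ring)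

theorem hasDerivAt_b_snd_neg (h : BaikRainsSystem u a b y) (s w : ℝ) :
    HasDerivAt (fun w' => b s (-w'))
      (-((4 * w * u s + 2 * deriv u s) * a s (-w)
        + (8 * w ^ 2 - 2 * s - 2 * u s ^ 2) * b s (-w))) w :=
  ((h.hasDerivAt_b_snd s (-w)).comp w (hasDerivAt_neg w)).congr_deriv (by ring)

theorem hasDerivAt_y_fst (h : BaikRainsSystem u a b y) (s w : ℝ) :
    HasDerivAt (fun s' => y s' w) (a s w * a s (-w)) s := by
  have hu := (h.differentiable_u s).hasDerivAt
  have hu' : HasDerivAt (deriv u) (2 * u s ^ 3 + s * u s) s :=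
    h.painleve s ▸ (h.differentiable_deriv_u s).hasDerivAt
  have ha := h.hasDerivAt_a_fst s w
  have ha' := h.hasDerivAt_a_fst s (-w)
  have hb := h.hasDerivAt_b_fst s w
  have hb' := h.hasDerivAt_b_fst s (-w)
  rw [show (fun s' => y s' w) = _ from funext fun s' => h.y_eq s' w]
  refine ((((((hu.pow 2).const_mul 2).add (hasDerivAt_id' s)).sub_const (4 * w ^ 2)).mul ha).mul ha'
    |>.sub (((hu'.add (hu.const_mul (2 * w))).mul hb).mul ha')
    |>.sub (((hu'.sub (hu.const_mul (2 * w))).mul ha).mul hb')).congr_deriv ?_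
  simp only [Pi.add_apply, Pi.sub_apply, Pi.mul_apply, Pi.pow_apply]
  linear_combination (-(2 * u s * deriv u s)) * h.b_mul_b_neg s w

theorem hasDerivAt_y_snd (h : BaikRainsSystem u a b y) (s w : ℝ) :
    HasDerivAt (y s) (-(8 * w) * (a s w * a s (-w)) - 2 * u s * (b s w * a s (-w))
      + 2 * u s * (a s w * b s (-w))) w := by
  have ha := h.hasDerivAt_a_snd s w
  have ha' := h.hasDerivAt_a_snd_neg s w
  have hb := h.hasDerivAt_b_snd s w
  have hb' := h.hasDerivAt_b_snd_neg s w
  have hw := hasDerivAt_id' w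
  rw [show y s = _ from funext fun w' => h.y_eq s w']
  have t₁ := ((((hasDerivAt_pow 2 w).const_mul 4).const_sub (2 * u s ^ 2 + s)).mul ha).mul ha'
  have t₂ := ((((hw.const_mul 2).mul_const (u s)).const_add (deriv u s)).mul hb).mul ha'
  have t₃ := ((((hw.const_mul 2).mul_const (u s)).const_sub (deriv u s)).mul ha).mul hb'
  refine ((t₁.sub t₂).sub t₃).congr_deriv ?_
  simp only [Pi.mul_apply]
  ring

theorem hasDerivAt_brState_fst (h : BaikRainsSystem u a b y) (s w : ℝ) (i : Var) :
    HasDerivAt (fun s' => brState u a b y s' w i) (eval (brState u a b y s w) (xFlow i)) s := by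
  have hy := h.hasDerivAt_y_fst s w
  have hy0 := (h.y_pos s w).ne'
  have ha := h.hasDerivAt_a_fst s w
  have ha' := h.hasDerivAt_a_fst s (-w)
  have hb := h.hasDerivAt_b_fst s w
  have hb' := h.hasDerivAt_b_fst s (-w)
  have hbb := h.b_mul_b_neg s w
  cases i with
  | p =>
    refine ((ha.mul ha').div hy hy0).congr_deriv ?_
    simp only [brState, xFlow, Pi.mul_apply, map_add, map_neg, map_mul, eval_X]
    field_simp
    ring
  | m =>
    refine ((hb.mul ha').div hy hy0).congr_deriv ?_
    simp only [brState, xFlow, Pi.mul_apply, map_add, map_sub, map_neg, map_mul, eval_X, eval_ofNat]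
    field_simp
    linear_combination (u s * y s w) * hbb
  | n =>
    refine ((ha.mul hb').div hy hy0).congr_deriv ?_
    simp only [brState, xFlow, Pi.mul_apply, map_add, map_neg, map_mul, eval_X, eval_ofNat]
    field_simp
    linear_combination (u s * y s w) * hbb
  | u => simpa [brState, xFlow] using (h.differentiable_u s).hasDerivAt
  | u' =>
    simpa [brState, xFlow, h.painleve s, pow_three, mul_assoc] using
      (h.differentiable_deriv_u s).hasDerivAt
  | s => simpa [brState, xFlow] using hasDerivAt_id' s
  | w => simpa [brState, xFlow] using hasDerivAt_const s w

theorem hasDerivAt_brState_snd (h : BaikRainsSystem u a b y) (s w : ℝ) (i : Var) :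
    HasDerivAt (fun w' => brState u a b y s w' i) (eval (brState u a b y s w) (wFlow i)) w := by
  have hy := h.hasDerivAt_y_snd s w
  have hy0 := (h.y_pos s w).ne'
  have ha := h.hasDerivAt_a_snd s w
  have ha' := h.hasDerivAt_a_snd_neg s w
  have hb := h.hasDerivAt_b_snd s w
  have hb' := h.hasDerivAt_b_snd_neg s w
  have hbb := h.b_mul_b_neg s w
  cases i with
  | p =>
    refine ((ha.mul ha').div hy hy0).congr_deriv ?_
    simp only [brState, wFlow, Pi.mul_apply, map_add, map_sub, map_mul, eval_X, eval_ofNat]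
    field_simp
    ring
  | m =>
    refine ((hb.mul ha').div hy hy0).congr_deriv ?_
    simp only [brState, wFlow, Pi.mul_apply, map_add, map_sub, map_mul, eval_X, eval_ofNat]
    field_simp
    linear_combination (2 * deriv u s - 4 * w * u s) * y s w * hbb
  | n =>
    refine ((ha.mul hb').div hy hy0).congr_deriv ?_
    simp only [brState, wFlow, Pi.mul_apply, map_add, map_sub, map_neg, map_mul, eval_X,
      eval_ofNat]
    field_simp
    linear_combination (-(2 * deriv u s + 4 * w * u s)) * y s w * hbb
  | u => simpa [brState, wFlow] using hasDerivAt_const w (u s)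
  | u' => simpa [brState, wFlow] using hasDerivAt_const w (deriv u s)
  | s => simpa [brState, wFlow] using hasDerivAt_const w s
  | w => simpa [brState, wFlow] using hasDerivAt_id' w

theorem derivFst_brEval (h : BaikRainsSystem u a b y) (P : MvPolynomial Var ℝ) :
    derivFst (brEval u a b y P) = brEval u a b y (Dx P) :=
  funext₂ fun s w => (hasDerivAt_eval_mkDerivation (h.hasDerivAt_brState_fst s w) P).deriv

theorem derivSnd_brEval (h : BaikRainsSystem u a b y) (P : MvPolynomial Var ℝ) :
    derivSnd (brEval u a b y P) = brEval u a b y (Dw P) :=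
  funext₂ fun s w => (hasDerivAt_eval_mkDerivation (h.hasDerivAt_brState_snd s w) P).deriv

theorem iterate_derivFst_brEval (h : BaikRainsSystem u a b y) (k : ℕ) (P : MvPolynomial Var ℝ) :
    derivFst^[k] (brEval u a b y P) = brEval u a b y (Dx^[k] P) := by
  induction k with
  | zero => rfl
  | succ k ih =>
    rw [Function.iterate_succ_apply', Function.iterate_succ_apply', ih, h.derivFst_brEval]

theorem differentiable_y (h : BaikRainsSystem u a b y) :
    Differentiable ℝ fun z : ℝ × ℝ => y z.1 z.2 := by
  have ha : Differentiable ℝ fun z : ℝ × ℝ => a z.1 z.2 := h.differentiable_a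
  have hb : Differentiable ℝ fun z : ℝ × ℝ => b z.1 z.2 := h.differentiable_b
  have hu := h.differentiable_u
  have hu' := h.differentiable_deriv_u
  simp only [h.y_eq]
  fun_prop

theorem differentiable_brEval (h : BaikRainsSystem u a b y) (P : MvPolynomial Var ℝ) :
    Differentiable ℝ (uncurry (brEval u a b y P)) := by
  refine differentiable_eval (S := fun z : ℝ × ℝ => brState u a b y z.1 z.2) (fun i => ?_) P
  have ha : Differentiable ℝ fun z : ℝ × ℝ => a z.1 z.2 := h.differentiable_a
  have hb : Differentiable ℝ fun z : ℝ × ℝ => b z.1 z.2 := h.differentiable_b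
  have hy0 : ∀ z : ℝ × ℝ, y z.1 z.2 ≠ 0 := fun z => (h.y_pos z.1 z.2).ne'
  have hu := h.differentiable_u
  have hu' := h.differentiable_deriv_u
  have hy' : Differentiable ℝ fun z : ℝ × ℝ => (y z.1 z.2)⁻¹ := h.differentiable_y.inv hy0
  cases i <;> simp only [brState, div_eq_mul_inv] <;> fun_prop

theorem derivFst_log_y (h : BaikRainsSystem u a b y) :
    derivFst (fun s w => log (y s w)) = brEval u a b y (X .p) :=
  funext₂ fun s w => ((h.hasDerivAt_y_fst s w).log (h.y_pos s w).ne').deriv.trans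
    (by rw [brEval, eval_X]; rfl)

theorem brState_m_mul_n (h : BaikRainsSystem u a b y) (s w : ℝ) :
    brState u a b y s w .m * brState u a b y s w .n = brState u a b y s w .p ^ 2 := by
  have hy0 := (h.y_pos s w).ne'
  simp only [brState]
  field_simp
  linear_combination (a s w * a s (-w)) * h.b_mul_b_neg s w

theorem brState_normalization (h : BaikRainsSystem u a b y) (s w : ℝ) :
    (2 * brState u a b y s w .u ^ 2 + brState u a b y s w .s - 4 * brState u a b y s w .w ^ 2)
        * brState u a b y s w .p
      - (brState u a b y s w .u' + 2 * brState u a b y s w .w * brState u a b y s w .u)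
        * brState u a b y s w .m
      - (brState u a b y s w .u' - 2 * brState u a b y s w .w * brState u a b y s w .u)
        * brState u a b y s w .n = 1 := by
  have hy0 := (h.y_pos s w).ne'
  simp only [brState]
  field_simp
  linear_combination -(h.y_eq s w)

theorem derivSnd_derivFst_brEval (h : BaikRainsSystem u a b y) (P : MvPolynomial Var ℝ) :
    derivSnd (derivFst (brEval u a b y P)) = derivFst (derivSnd (brEval u a b y P)) := by
  rw [h.derivFst_brEval, h.derivSnd_brEval, h.derivSnd_brEval, h.derivFst_brEval, Dx_Dw_comm]

theorem reducedKP_brEval (h : BaikRainsSystem u a b y) (s w : ℝ) :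
    reducedKP u (brEval u a b y (xFlow .p)) s w = 0 := by
  rw [reducedKP, h.painleve, h.iterate_derivFst_brEval, h.iterate_derivFst_brEval,
    h.derivFst_brEval, h.derivSnd_brEval, h.derivSnd_brEval, h.derivSnd_brEval]
  exact reducedKPJet_eval_eq_zero _ (h.brState_m_mul_n s w) (h.brState_normalization s w)

theorem iterate_derivFst_log_y (h : BaikRainsSystem u a b y) :
    derivFst^[2] (fun s w => log (y s w)) = brEval u a b y (xFlow .p) := by
  rw [Function.iterate_succ_apply', Function.iterate_one, h.derivFst_log_y, h.derivFst_brEval,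
    mkDerivation_X]

theorem iteratedDeriv_log_y_eq_selfSimilar (h : BaikRainsSystem u a b y) {x t : ℝ} (ht : 0 < t)
    (r : ℝ) :
    iteratedDeriv 2 (fun r' => log (y (t ^ (-(1:ℝ)/3) * r' + t ^ (-(4:ℝ)/3) * x ^ 2)
      (t ^ (-(2:ℝ)/3) * x / 2))) r = selfSimilar (brEval u a b y (xFlow .p)) x t r := by
  have hd : ∀ j < 2, ∀ s w,
      DifferentiableAt ℝ (fun s' => derivFst^[j] (fun s w => log (y s w)) s' w) s := by
    intro j hj s w
    interval_cases j
    · exact ((h.hasDerivAt_y_fst s w).log (h.y_pos s w).ne').differentiableAt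
    · rw [Function.iterate_one, h.derivFst_log_y]
      exact (h.differentiable_brEval _).differentiableAt_fst s w
  rw [rpow_neg_two_div_three ht.le, rpow_neg_four_div_three ht.le,
    iteratedDeriv_comp_affine_fst (f := fun s w => log (y s w)) fun j hj s => hd j hj s _,
    h.iterate_derivFst_log_y]
  rfl

end BaikRainsSystem

theorem baikRains_g_solves_modifiedKP_general
    (u : ℝ → ℝ) (a b y : ℝ → ℝ → ℝ)
    (hu : ContDiff ℝ (⊤ : ℕ∞) u)
    (hP2 : ∀ x : ℝ, deriv (deriv u) x = 2 * u x ^ 3 + x * u x)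
    (ha : ContDiff ℝ (⊤ : ℕ∞) (fun p : ℝ × ℝ => a p.1 p.2))
    (hb : ContDiff ℝ (⊤ : ℕ∞) (fun p : ℝ × ℝ => b p.1 p.2))
    (hax : ∀ x w : ℝ, deriv (fun x' => a x' w) x = u x * b x w)
    (hbx : ∀ x w : ℝ, deriv (fun x' => b x' w) x = u x * a x w - 2 * w * b x w)
    (haw : ∀ x w : ℝ, deriv (fun w' => a x w') w
      = 2 * u x ^ 2 * a x w - (4 * w * u x + 2 * deriv u x) * b x w)
    (hbw : ∀ x w : ℝ, deriv (fun w' => b x w') w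
      = (-(4 * w * u x) + 2 * deriv u x) * a x w
        + (8 * w ^ 2 - 2 * x - 2 * u x ^ 2) * b x w)
    (hab : ∀ x w : ℝ, a x w = -b x (-w) * Real.exp (8 * w ^ 3 / 3 - 2 * w * x))
    (hy : ∀ x w : ℝ, y x w
      = (2 * u x ^ 2 + x - 4 * w ^ 2) * a x w * a x (-w)
        - (deriv u x + 2 * w * u x) * b x w * a x (-w)
        - (deriv u x - 2 * w * u x) * a x w * b x (-w))
    (hypos : ∀ x w : ℝ, 0 < y x w) :
    ∀ x t r : ℝ, 0 < t →
      kpModDiff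
        (fun x t r =>
          -(t ^ (-(2:ℝ)/3)) * u (t ^ (-(1:ℝ)/3) * r + t ^ (-(4:ℝ)/3) * x ^ 2) ^ 2)
        (fun x t r =>
          iteratedDeriv 2 (fun r' =>
            Real.log (y (t ^ (-(1:ℝ)/3) * r' + t ^ (-(4:ℝ)/3) * x ^ 2)
              (t ^ (-(2:ℝ)/3) * x / 2))) r) x t r = 0 := by
  intro x t r ht
  have h : BaikRainsSystem u a b y :=
    ⟨hu.differentiable (by simp), (contDiff_infty_iff_deriv.mp hu).2.differentiable (by simp), hP2,
      ha.differentiable (by simp), hb.differentiable (by simp), hax, hbx, haw, hbw, hab, hy, hypos⟩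
  rw [kpModDiff_congr (ψ' := selfSimilar (brEval u a b y (xFlow .p)))
      (φ' := fun x t r => -(scale t ^ 2) * u (scale t * r + scale t ^ 4 * x ^ 2) ^ 2)
      (fun x r => by rw [rpow_neg_two_div_three ht.le, rpow_neg_four_div_three ht.le]; rfl)
      ((eventually_gt_nhds ht).mono fun t ht x r => h.iteratedDeriv_log_y_eq_selfSimilar ht r),
    kpModDiff_selfSimilar h.differentiable_u h.differentiable_deriv_u
      (fun k _ => h.iterate_derivFst_brEval k _ ▸ h.differentiable_brEval _)
      (h.derivSnd_brEval _ ▸ h.differentiable_brEval _) (h.derivSnd_derivFst_brEval _) ht r,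
    h.reducedKP_brEval, mul_zero]

/-- ψ(x,t,r) = ∂_r²[log y(s, t^{-2/3}x/2)] with s = t^{-1/3}r + t^{-4/3}x² satisfies the (r-differentiated) modified KP equation with coefficient φ_gue(x,t,r) = −t^{-2/3}·u(s)² on ℝ × (0,∞) × ℝ. -/
theorem baikRains_g_solves_modifiedKP
    (u : ℝ → ℝ) (a b y : ℝ → ℝ → ℝ)
    (hu : ContDiff ℝ (⊤ : ℕ∞) u)
    (hP2 : ∀ x : ℝ, deriv (deriv u) x = 2 * u x ^ 3 + x * u x)
    (ha : ContDiff ℝ (⊤ : ℕ∞) (fun p : ℝ × ℝ => a p.1 p.2))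
    (hb : ContDiff ℝ (⊤ : ℕ∞) (fun p : ℝ × ℝ => b p.1 p.2))
    (hax : ∀ x w : ℝ, deriv (fun x' => a x' w) x = u x * b x w)
    (hbx : ∀ x w : ℝ, deriv (fun x' => b x' w) x = u x * a x w - 2 * w * b x w)
    (haw : ∀ x w : ℝ, deriv (fun w' => a x w') w
      = 2 * u x ^ 2 * a x w - (4 * w * u x + 2 * deriv u x) * b x w)
    (hbw : ∀ x w : ℝ, deriv (fun w' => b x w') w
      = (-(4 * w * u x) + 2 * deriv u x) * a x w
        + (8 * w ^ 2 - 2 * x - 2 * u x ^ 2) * b x w)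
    (hab : ∀ x w : ℝ, a x w = -b x (-w) * Real.exp (8 * w ^ 3 / 3 - 2 * w * x))
    (hba : ∀ x w : ℝ, b x w = -a x (-w) * Real.exp (8 * w ^ 3 / 3 - 2 * w * x))
    (hy : ∀ x w : ℝ, y x w
      = (2 * u x ^ 2 + x - 4 * w ^ 2) * a x w * a x (-w)
        - (deriv u x + 2 * w * u x) * b x w * a x (-w)
        - (deriv u x - 2 * w * u x) * a x w * b x (-w))
    (hypos : ∀ x w : ℝ, 0 < y x w) :
    ∀ x t r : ℝ, 0 < t →
      kpModDiff
        (fun x t r =>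
          -(t ^ (-(2:ℝ)/3)) * u (t ^ (-(1:ℝ)/3) * r + t ^ (-(4:ℝ)/3) * x ^ 2) ^ 2)
        (fun x t r =>
          iteratedDeriv 2 (fun r' =>
            Real.log (y (t ^ (-(1:ℝ)/3) * r' + t ^ (-(4:ℝ)/3) * x ^ 2)
              (t ^ (-(2:ℝ)/3) * x / 2))) r) x t r = 0 :=
  baikRains_g_solves_modifiedKP_general u a b y hu hP2 ha hb hax hbx haw hbw hab hy hypos
end

section
/- Let q : ℝ → ℝ be infinitely differentiable and satisfy the Painlevé II equation q''(r) = r·q(r) + 2·q(r)^3 for all r ∈ ℝ. Define ψ(r) = (1/2)·(q'(r) − q(r)^2). Then ψ satisfies ψ'''(r) + 12·ψ'(r)·ψ(r) − r·ψ'(r) − 2·ψ(r) = 0 for all r ∈ ℝ. -/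
/-!
Along a solution of Painlevé II, written as the first-order system `q' = p`, `p' = r q + 2 q³`,
the function `ψ = (p - q²)/2` satisfies `ψ' = r q/2 - 2 q ψ`. Differentiating twice more by the
product rule, and eliminating `p'` with the equation, expresses `ψ'''` through `r, q, p`; expanding
`ψ` and `ψ'` shows that this expression equals `r ψ' + 2 ψ - 12 ψ' ψ`.
-/

noncomputable section

namespace PainleveII

variable {q p : ℝ → ℝ}

def psi (q p : ℝ → ℝ) (r : ℝ) : ℝ := 1 / 2 * (p r - q r ^ 2)

def psi1 (q p : ℝ → ℝ) (r : ℝ) : ℝ := r * q r / 2 - 2 * q r * psi q p r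

def psi2 (q p : ℝ → ℝ) (r : ℝ) : ℝ :=
  q r / 2 + r * p r / 2 - 2 * p r * psi q p r - 2 * q r * psi1 q p r

variable (hq : ∀ r, HasDerivAt q (p r) r)
  (hp : ∀ r, HasDerivAt p (r * q r + 2 * q r ^ 3) r)
include hq hp

theorem hasDerivAt_psi (r : ℝ) : HasDerivAt (psi q p) (psi1 q p r) r := by
  have h := ((hp r).sub ((hq r).pow 2)).const_mul (1 / 2 : ℝ)
  refine h.congr_deriv ?_
  simp only [psi1, psi]
  push_cast
  ring

theorem hasDerivAt_psi1 (r : ℝ) : HasDerivAt (psi1 q p) (psi2 q p r) r := by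
  have h := (((hasDerivAt_id r).mul (hq r)).div_const 2).sub
    (((hq r).const_mul 2).mul (hasDerivAt_psi hq hp r))
  refine h.congr_deriv ?_
  simp only [psi2, id]
  ring

theorem hasDerivAt_psi2 (r : ℝ) :
    HasDerivAt (psi2 q p) (r * psi1 q p r + 2 * psi q p r - 12 * psi1 q p r * psi q p r) r := by
  have h := (((((hq r).div_const 2).add (((hasDerivAt_id r).mul (hp r)).div_const 2)).sub
    (((hp r).const_mul 2).mul (hasDerivAt_psi hq hp r))).sub
    (((hq r).const_mul 2).mul (hasDerivAt_psi1 hq hp r)))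
  refine h.congr_deriv ?_
  simp only [psi2, psi1, psi, id]
  ring

end PainleveII

end

open PainleveII in
/-- if `q` solves Painlevé II, `q'' = r q + 2 q³`, then
`ψ = (1/2)(q' - q²)` solves `ψ''' + 12 ψ' ψ - r ψ' - 2 ψ = 0`. -/
theorem half_qprime_sub_sq_solves_GOE_ode (q : ℝ → ℝ)
    (hq : ContDiff ℝ (⊤ : ℕ∞) q)
    (hP2 : ∀ r : ℝ, deriv (deriv q) r = r * q r + 2 * q r ^ 3) :
    ∀ r : ℝ,
      iteratedDeriv 3 (fun s => (1/2) * (deriv q s - q s ^ 2)) r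
        + 12 * deriv (fun s => (1/2) * (deriv q s - q s ^ 2)) r
            * ((1/2) * (deriv q r - q r ^ 2))
        - r * deriv (fun s => (1/2) * (deriv q s - q s ^ 2)) r
        - 2 * ((1/2) * (deriv q r - q r ^ 2)) = 0 := by
  intro r
  have hq2 : ContDiff ℝ 2 q := hq.of_le (by norm_cast)
  have hdq : ∀ s, HasDerivAt q (deriv q s) s := fun s =>
    (hq2.differentiable (by norm_num) s).hasDerivAt
  have hddq : ∀ s, HasDerivAt (deriv q) (s * q s + 2 * q s ^ 3) s := fun s =>
    hP2 s ▸ (hq2.differentiable_deriv_two s).hasDerivAt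
  have hψ : deriv (psi q (deriv q)) = psi1 q (deriv q) :=
    funext fun s => (hasDerivAt_psi hdq hddq s).deriv
  have hψ1 : deriv (psi1 q (deriv q)) = psi2 q (deriv q) :=
    funext fun s => (hasDerivAt_psi1 hdq hddq s).deriv
  change iteratedDeriv 3 (psi q (deriv q)) r + 12 * deriv (psi q (deriv q)) r * psi q (deriv q) r
    - r * deriv (psi q (deriv q)) r - 2 * psi q (deriv q) r = 0
  rw [iteratedDeriv_eq_iterate]
  simp only [Function.iterate_succ, Function.iterate_zero, Function.comp_apply, id, hψ, hψ1,
    (hasDerivAt_psi2 hdq hddq r).deriv]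
  ring
end

section
/- Let A ⊆ ℂ be open and let γ : ℝ → ℂ be a continuously differentiable parametrization of a contour C. Let f : A × ℂ → ℂ satisfy: (1) for each t ∈ ℝ, the map z ↦ f(z, γ(t)) is analytic on A; (2) for each z ∈ A, the map t ↦ f(z, γ(t)) is continuous on ℝ; (3) for each z ∈ A there exists ρ > 0 such that the closed disc of radius ρ around z lies in A and ∫_ℝ ∫_0^{2π} |f(z + ρ·e^{iθ}, γ(t))| · ρ · |γ'(t)| dθ dt < ∞. Then the function F : A → ℂ defined by F(z) = ∫_ℝ f(z, γ(t))·γ'(t) dt is analytic on A, and its derivative is given by differentiation under the integral sign: F'(z) = ∫_ℝ (∂f/∂z)(z, γ(t))·γ'(t) dt for every z ∈ A. -/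
open MeasureTheory Set Complex Filter Metric Real Topology

/-!
For each `t`, `z ↦ f z (γ t)` is holomorphic on the closed disc of radius `ρ`
around `z₀`. By the generalized mean value property, `f w (γ t)` is the circle average of
`((ζ - z₀) / (ζ - w)) • f ζ (γ t)` over the circle of radius `ρ`, so the value at `z₀` and all
difference quotients on the disc of radius `ρ / 2` are bounded by `1` resp. `4 / ρ` times the
circle average of `‖f ζ (γ t)‖`. Hypothesis (3) says exactly that this circle average, weighted by
`‖γ' t‖`, is integrable in `t`, so differentiation under the integral sign (in its Lipschitz form)
applies.
-/

section

variable {α E : Type*} [MeasurableSpace α] {μ : Measure α} [NormedAddCommGroup E] [NormedSpace ℝ E]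
  {c : ℂ} {R : ℝ}

theorem norm_circleAverage_le_of_norm_le {f : ℂ → E} {g : ℂ → ℝ} (hg : CircleIntegrable g c R)
    (hfg : ∀ z ∈ sphere c |R|, ‖f z‖ ≤ g z) :
    ‖circleAverage f c R‖ ≤ circleAverage g c R := by
  rw [circleAverage_def, circleAverage_def, norm_smul, Real.norm_of_nonneg (by positivity),
    smul_eq_mul]
  gcongr
  exact intervalIntegral.norm_integral_le_of_norm_le (by positivity)
    (ae_of_all _ fun θ _ => hfg _ (circleMap_mem_sphere' c R θ)) hg

theorem stronglyMeasurable_circleAverage {g : ℂ → α → E}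
    (hg_cont : ∀ t, ContinuousOn (g · t) (sphere c |R|))
    (hg_meas : ∀ z ∈ sphere c |R|, StronglyMeasurable (g z)) :
    StronglyMeasurable fun t => circleAverage (g · t) c R := by
  have huncurry : StronglyMeasurable (Function.uncurry fun θ t => g (circleMap c R θ) t) :=
    stronglyMeasurable_uncurry_of_continuous_of_stronglyMeasurable
      (fun t => (hg_cont t).comp_continuous (continuous_circleMap c R) (circleMap_mem_sphere' c R))
      (fun θ => hg_meas _ (circleMap_mem_sphere' c R θ))
  simp only [circleAverage_def, intervalIntegral.integral_of_le two_pi_pos.le]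
  exact (huncurry.integral_prod_left (μ := volume.restrict (Ioc 0 (2 * π)))).const_smul _

theorem lintegral_Icc_ofReal_circleMap {g : ℂ → ℝ} (hg : CircleIntegrable g c R)
    (hg_nonneg : ∀ z ∈ sphere c |R|, 0 ≤ g z) :
    ∫⁻ θ in Icc 0 (2 * π), ENNReal.ofReal (g (circleMap c R θ)) =
      ENNReal.ofReal (2 * π * circleAverage g c R) := by
  rw [← ofReal_integral_eq_lintegral_ofReal
      ((intervalIntegrable_iff_integrableOn_Icc_of_le two_pi_pos.le).1 hg)
      (ae_of_all _ fun θ => hg_nonneg _ (circleMap_mem_sphere' c R θ)),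
    integral_Icc_eq_integral_Ioc, ← intervalIntegral.integral_of_le two_pi_pos.le,
    circleAverage_def, smul_eq_mul, mul_inv_cancel_left₀ two_pi_pos.ne']

theorem integrable_circleAverage_of_lintegral_lt_top {g : ℂ → α → ℝ}
    (hg_cont : ∀ t, ContinuousOn (g · t) (sphere c |R|))
    (hg_meas : ∀ z ∈ sphere c |R|, StronglyMeasurable (g z))
    (hg_nonneg : ∀ t, ∀ z ∈ sphere c |R|, 0 ≤ g z t)
    (hg_fin : ∫⁻ t, (∫⁻ θ in Icc 0 (2 * π), ENNReal.ofReal (g (circleMap c R θ) t)) ∂μ < ⊤) :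
    Integrable (fun t => circleAverage (g · t) c R) μ := by
  have hmeas := stronglyMeasurable_circleAverage hg_cont hg_meas
  have hnonneg : ∀ t, 0 ≤ circleAverage (g · t) c R := fun t =>
    circleAverage_nonneg_of_nonneg (hg_nonneg t)
  simp only [fun t => lintegral_Icc_ofReal_circleMap (hg_cont t).circleIntegrable' (hg_nonneg t),
    ENNReal.ofReal_mul two_pi_pos.le] at hg_fin
  rw [lintegral_const_mul' _ _ ENNReal.ofReal_ne_top] at hg_fin
  refine ⟨hmeas.aestronglyMeasurable, (hasFiniteIntegral_iff_ofReal (ae_of_all _ hnonneg)).2 ?_⟩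
  exact ENNReal.lt_top_of_mul_ne_top_right hg_fin.ne (by simp [pi_pos])


end

section CauchyEstimates

variable {E : Type*} [NormedAddCommGroup E] [NormedSpace ℂ E] [CompleteSpace E]
  {f : ℂ → E} {c w w' : ℂ} {r R : ℝ}

theorem DiffContOnCl.norm_le_circleAverage_norm (hf : DiffContOnCl ℂ f (ball c R)) (hR : 0 ≤ R) :
    ‖f c‖ ≤ Real.circleAverage (‖f ·‖) c R := by
  have hcont : ContinuousOn f (sphere c |R|) := by
    rw [abs_of_nonneg hR]; exact hf.continuousOn_ball.mono sphere_subset_closedBall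
  have hf' : DiffContOnCl ℂ f (ball c |R|) := by rwa [abs_of_nonneg hR]
  rw [← hf'.circleAverage]
  exact norm_circleAverage_le_of_norm_le hcont.norm.circleIntegrable' fun z _ => le_rfl

theorem DiffContOnCl.norm_sub_le_circleAverage_norm (hf : DiffContOnCl ℂ f (ball c R))
    (hw : w ∈ closedBall c r) (hw' : w' ∈ closedBall c r) (hr : r < R) :
    ‖f w - f w'‖ ≤ R / (R - r) ^ 2 * Real.circleAverage (‖f ·‖) c R * ‖w - w'‖ := by
  have hR : 0 < R := (dist_nonneg.trans (mem_closedBall.1 hw)).trans_lt hr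
  have hcont : ContinuousOn f (sphere c |R|) := by
    rw [abs_of_pos hR]; exact hf.continuousOn_ball.mono sphere_subset_closedBall
  have hfar : ∀ z ∈ sphere c |R|, ∀ v ∈ closedBall c r, R - r ≤ ‖z - v‖ := by
    intro z hz v hv
    rw [mem_sphere, abs_of_pos hR] at hz
    rw [← dist_eq_norm]
    linarith [dist_triangle z v c, mem_closedBall.1 hv]
  have hne : ∀ z ∈ sphere c |R|, ∀ v ∈ closedBall c r, z - v ≠ 0 := fun z hz v hv =>
    norm_pos_iff.1 ((sub_pos.2 hr).trans_le (hfar z hz v hv))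
  have hint : ∀ v ∈ closedBall c r, CircleIntegrable (fun z => ((z - c) / (z - v)) • f z) c R :=
    fun v hv => ContinuousOn.circleIntegrable' <|
      ((continuousOn_id.sub continuousOn_const).div (continuousOn_id.sub continuousOn_const)
        fun z hz => hne z hz v hv).smul hcont
  have hmem : ∀ v ∈ closedBall c r, v ∈ ball c |R| := fun v hv => by
    rw [abs_of_pos hR]; exact closedBall_subset_ball hr hv
  have hf' : DiffContOnCl ℂ f (ball c |R|) := by rwa [abs_of_pos hR]
  have hkernel : ∀ z ∈ sphere c |R|,
      ‖(z - c) / (z - w) - (z - c) / (z - w')‖ ≤ R / (R - r) ^ 2 * ‖w - w'‖ := by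
    intro z hz
    have hzc : ‖z - c‖ = R := by rw [← dist_eq_norm, mem_sphere.1 hz, abs_of_pos hR]
    rw [div_sub_div _ _ (hne z hz w hw) (hne z hz w' hw'),
      show (z - c) * (z - w') - (z - w) * (z - c) = (z - c) * (w - w') by ring,
      norm_div, norm_mul, norm_mul, hzc, mul_div_right_comm, sq]
    gcongr
    exacts [hfar z hz w hw, hfar z hz w' hw']
  calc ‖f w - f w'‖
      = ‖Real.circleAverage (fun z => ((z - c) / (z - w) - (z - c) / (z - w')) • f z) c R‖ := by
        simp_rw [sub_smul]
        rw [circleAverage_fun_sub (hint w hw) (hint w' hw'), hf'.circleAverage_smul_div (hmem w hw),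
          hf'.circleAverage_smul_div (hmem w' hw')]
    _ ≤ Real.circleAverage (fun z => (R / (R - r) ^ 2 * ‖w - w'‖) • ‖f z‖) c R := by
        refine norm_circleAverage_le_of_norm_le (ContinuousOn.circleIntegrable' (by fun_prop))
          fun z hz => ?_
        rw [norm_smul, smul_eq_mul]
        gcongr
        exact hkernel z hz
    _ = R / (R - r) ^ 2 * Real.circleAverage (‖f ·‖) c R * ‖w - w'‖ := by
        rw [circleAverage_fun_smul, smul_eq_mul]; ring

end CauchyEstimates

theorem aestronglyMeasurable_deriv_of_eventually_aestronglyMeasurable {𝕜 E α : Type*}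
    [NontriviallyNormedField 𝕜] [NormedAddCommGroup E] [NormedSpace 𝕜 E] [MeasurableSpace α]
    {μ : Measure α} {F : 𝕜 → α → E} {x₀ : 𝕜}
    (hF_meas : ∀ᶠ x in 𝓝 x₀, AEStronglyMeasurable (F x) μ)
    (hF_diff : ∀ᵐ a ∂μ, DifferentiableAt 𝕜 (F · a) x₀) :
    AEStronglyMeasurable (fun a => deriv (F · a) x₀) μ := by
  obtain ⟨u, hu⟩ := (𝓝[≠] x₀).exists_seq_tendsto
  have hslope_meas : ∀ᶠ n in atTop, AEStronglyMeasurable (fun a => slope (F · a) x₀ (u n)) μ :=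
    (hu.eventually (eventually_nhdsWithin_of_eventually_nhds hF_meas)).mono fun n hn =>
      (hn.sub hF_meas.self_of_nhds).const_smul _
  obtain ⟨N, hN⟩ := eventually_atTop.1 hslope_meas
  refine aestronglyMeasurable_of_tendsto_ae atTop (fun n => hN (n + N) (Nat.le_add_left N n)) ?_
  filter_upwards [hF_diff] with a ha
  exact (hasDerivAt_iff_tendsto_slope.1 ha.hasDerivAt).comp ((tendsto_add_atTop_iff_nat N).2 hu)

theorem hasDerivAt_integral_of_integrable_circleAverage_norm {α E : Type*} [MeasurableSpace α]
    {μ : Measure α} [NormedAddCommGroup E] [NormedSpace ℂ E] [CompleteSpace E]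
    {F : ℂ → α → E} {z₀ : ℂ} {ρ : ℝ} (hρ : 0 < ρ)
    (hF_meas : ∀ᶠ z in 𝓝 z₀, AEStronglyMeasurable (F z) μ)
    (hF_diff : ∀ᵐ t ∂μ, DiffContOnCl ℂ (F · t) (ball z₀ ρ))
    (hF_int : Integrable (fun t => circleAverage (‖F · t‖) z₀ ρ) μ) :
    HasDerivAt (fun z => ∫ t, F z t ∂μ) (∫ t, deriv (F · t) z₀ ∂μ) z₀ := by
  have hdiff : ∀ᵐ t ∂μ, DifferentiableAt ℂ (F · t) z₀ :=
    hF_diff.mono fun t ht => ht.differentiableAt isOpen_ball (mem_ball_self hρ)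
  have hF_int₀ : Integrable (F z₀) μ :=
    hF_int.mono' hF_meas.self_of_nhds (hF_diff.mono fun t ht => ht.norm_le_circleAverage_norm hρ.le)
  have hlip : ∀ᵐ t ∂μ, LipschitzOnWith
      (Real.nnabs (ρ / (ρ - ρ / 2) ^ 2 * circleAverage (‖F · t‖) z₀ ρ)) (F · t) (ball z₀ (ρ / 2)) :=
    hF_diff.mono fun t ht => LipschitzOnWith.of_dist_le_mul fun w hw w' hw' => by
      have hM : 0 ≤ circleAverage (‖F · t‖) z₀ ρ :=
        circleAverage_nonneg_of_nonneg fun _ _ => norm_nonneg _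
      rw [Real.coe_nnabs, abs_of_nonneg (by positivity), dist_eq_norm, dist_eq_norm]
      exact ht.norm_sub_le_circleAverage_norm (ball_subset_closedBall hw)
        (ball_subset_closedBall hw') (half_lt_self hρ)
  exact (hasDerivAt_integral_of_dominated_loc_of_lip (ball_mem_nhds z₀ (half_pos hρ)) hF_meas
    hF_int₀ (aestronglyMeasurable_deriv_of_eventually_aestronglyMeasurable hF_meas hdiff) hlip
    (hF_int.const_mul _) (hdiff.mono fun t ht => ht.hasDerivAt)).2

theorem hasDerivAt_integral_mul_deriv_of_lintegral_circle_lt_top {γ : ℝ → ℂ} {f : ℂ → ℂ → ℂ}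
    {z₀ : ℂ} {ρ : ℝ} (hρ : 0 < ρ)
    (hf_diff : ∀ t, DifferentiableOn ℂ (f · (γ t)) (closedBall z₀ ρ))
    (hf_cont : ∀ z ∈ closedBall z₀ ρ, Continuous fun t => f z (γ t))
    (hf_fin : ∫⁻ t : ℝ, ∫⁻ θ in Icc 0 (2 * π),
      ENNReal.ofReal (‖f (circleMap z₀ ρ θ) (γ t)‖ * ρ * ‖deriv γ t‖) < ⊤) :
    HasDerivAt (fun z => ∫ t, f z (γ t) * deriv γ t) (∫ t, deriv (f · (γ t)) z₀ * deriv γ t) z₀ := by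
  have hsphere : sphere z₀ |ρ| ⊆ closedBall z₀ ρ := by
    rw [abs_of_pos hρ]; exact sphere_subset_closedBall
  have hM : Integrable fun t => circleAverage (fun z => ‖f z (γ t)‖ * ρ * ‖deriv γ t‖) z₀ ρ :=
    integrable_circleAverage_of_lintegral_lt_top
      (fun t => (((hf_diff t).continuousOn.mono hsphere).norm.mul continuousOn_const).mul
        continuousOn_const)
      (fun z hz => ((hf_cont z (hsphere hz)).norm.stronglyMeasurable.mul_const ρ).mul
        (stronglyMeasurable_deriv γ).norm)
      (fun t z _ => by positivity) hf_fin
  have hF_int : Integrable fun t => circleAverage (‖f · (γ t) * deriv γ t‖) z₀ ρ := by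
    refine (hM.const_mul ρ⁻¹).congr (ae_of_all _ fun t => ?_)
    dsimp only
    rw [← smul_eq_mul, ← circleAverage_fun_smul]
    congr 1
    funext z
    rw [norm_mul, smul_eq_mul]
    field_simp
  have hF_meas : ∀ᶠ z in 𝓝 z₀, AEStronglyMeasurable (fun t => f z (γ t) * deriv γ t) :=
    eventually_of_mem (closedBall_mem_nhds z₀ hρ) fun z hz =>
      ((hf_cont z hz).stronglyMeasurable.mul (stronglyMeasurable_deriv γ)).aestronglyMeasurable
  refine (hasDerivAt_integral_of_integrable_circleAverage_norm hρ hF_meas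
    (ae_of_all _ fun t => ((hf_diff t).mul_const _).diffContOnCl_ball subset_rfl)
    hF_int).congr_deriv (integral_congr_ae (ae_of_all _ fun t => ?_))
  exact deriv_mul_const ((hf_diff t).differentiableAt (closedBall_mem_nhds z₀ hρ)) _

theorem contour_integral_differentiation_general (A : Set ℂ)
    (γ : ℝ → ℂ)
    (f : ℂ → ℂ → ℂ)
    (h_analytic : ∀ t : ℝ, DifferentiableOn ℂ (fun z => f z (γ t)) A)
    (h_cont : ∀ z ∈ A, Continuous fun t : ℝ => f z (γ t))
    (h_int : ∀ z ∈ A, ∃ ρ : ℝ, 0 < ρ ∧ Metric.closedBall z ρ ⊆ A ∧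
      (∫⁻ t : ℝ, ∫⁻ θ in Icc (0:ℝ) (2 * Real.pi),
        ENNReal.ofReal
          (‖f (z + (ρ : ℂ) * Complex.exp (θ * Complex.I)) (γ t)‖ * ρ * ‖deriv γ t‖))
        < ⊤) :
    DifferentiableOn ℂ (fun z => ∫ t : ℝ, f z (γ t) * deriv γ t) A ∧
      ∀ z ∈ A, deriv (fun z' => ∫ t : ℝ, f z' (γ t) * deriv γ t) z
        = ∫ t : ℝ, deriv (fun z' => f z' (γ t)) z * deriv γ t := by
  have key : ∀ z ∈ A, HasDerivAt (fun z => ∫ t : ℝ, f z (γ t) * deriv γ t)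
      (∫ t : ℝ, deriv (fun z' => f z' (γ t)) z * deriv γ t) z := by
    intro z hz
    obtain ⟨ρ, hρ, hball, hfin⟩ := h_int z hz
    exact hasDerivAt_integral_mul_deriv_of_lintegral_circle_lt_top hρ
      (fun t => (h_analytic t).mono hball) (fun w hw => h_cont w (hball hw)) hfin
  exact ⟨fun z hz => (key z hz).differentiableAt.differentiableWithinAt,
    fun z hz => (key z hz).deriv⟩

/-- differentiation of a contour integral under the integral sign.
If `f(z,ζ)` is analytic in `z` on an open set `A`, continuous in the contour parameter,
and jointly absolutely integrable over the contour and a small circle around each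
`z ∈ A`, then `F(z) = ∫_C f(z,ζ) dζ` is analytic on `A` with
`F'(z) = ∫_C ∂f/∂z (z,ζ) dζ`. -/
theorem contour_integral_differentiation (A : Set ℂ) (hA : IsOpen A)
    (γ : ℝ → ℂ) (hγ : ContDiff ℝ 1 γ)
    (f : ℂ → ℂ → ℂ)
    (h_analytic : ∀ t : ℝ, DifferentiableOn ℂ (fun z => f z (γ t)) A)
    (h_cont : ∀ z ∈ A, Continuous fun t : ℝ => f z (γ t))
    (h_int : ∀ z ∈ A, ∃ ρ : ℝ, 0 < ρ ∧ Metric.closedBall z ρ ⊆ A ∧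
      (∫⁻ t : ℝ, ∫⁻ θ in Icc (0:ℝ) (2 * Real.pi),
        ENNReal.ofReal
          (‖f (z + (ρ : ℂ) * Complex.exp (θ * Complex.I)) (γ t)‖ * ρ * ‖deriv γ t‖))
        < ⊤) :
    DifferentiableOn ℂ (fun z => ∫ t : ℝ, f z (γ t) * deriv γ t) A ∧
      ∀ z ∈ A, deriv (fun z' => ∫ t : ℝ, f z' (γ t) * deriv γ t) z
        = ∫ t : ℝ, deriv (fun z' => f z' (γ t)) z * deriv γ t :=
  contour_integral_differentiation_general A γ f h_analytic h_cont h_int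
end

section
/- Let u, a, b, y be as in the Painlevé II system below. Then for all (x,w) ∈ ℝ × ℝ: ∂_x y(x,w) = a(x,w)·a(x,−w). -/
/-!
Differentiating the defining formula of `y` in `x` with the Painlevé II equation and the
`x`-equations of the Lax pair gives `a(x,w) a(x,-w) + 2 u u' (a(x,w) a(x,-w) - b(x,w) b(x,-w))`.
The correction term vanishes: applying the symmetry `a(x,w) = -b(x,-w) e^{φ(w)}` at `w` and `-w`,
with `φ(w) = 8w³/3 - 2wx` odd, gives `a(x,w) a(x,-w) = b(x,w) b(x,-w)`.
-/

open Real

theorem mul_apply_neg_eq_of_eq_neg_mul_exp {A B φ : ℝ → ℝ} (hφ : ∀ w, φ (-w) = -φ w)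
    (hA : ∀ w, A w = -B (-w) * exp (φ w)) (w : ℝ) : A w * A (-w) = B w * B (-w) := by
  have hexp : exp (φ w) * exp (φ (-w)) = 1 := by rw [hφ, ← exp_add, add_neg_cancel, exp_zero]
  calc A w * A (-w) = B w * B (-w) * (exp (φ w) * exp (φ (-w))) := by
        rw [hA w, hA (-w), neg_neg]; ring
    _ = B w * B (-w) := by rw [hexp, mul_one]

theorem Differentiable.apply_left {𝕜 E F G : Type*} [NontriviallyNormedField 𝕜]
    [NormedAddCommGroup E] [NormedSpace 𝕜 E] [NormedAddCommGroup F] [NormedSpace 𝕜 F]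
    [NormedAddCommGroup G] [NormedSpace 𝕜 G] {f : E → F → G}
    (hf : Differentiable 𝕜 (fun p : E × F => f p.1 p.2)) (w : F) :
    Differentiable 𝕜 (fun x => f x w) :=
  hf.comp (differentiable_id.prodMk (differentiable_const w))

theorem hasDerivAt_painleveII_y {u u' A B C D : ℝ → ℝ} {x w : ℝ}
    (hu : HasDerivAt u (u' x) x) (hu' : HasDerivAt u' (2 * u x ^ 3 + x * u x) x)
    (hA : HasDerivAt A (u x * B x) x) (hB : HasDerivAt B (u x * A x - 2 * w * B x) x)
    (hC : HasDerivAt C (u x * D x) x) (hD : HasDerivAt D (u x * C x - 2 * -w * D x) x) :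
    HasDerivAt (fun t => (2 * u t ^ 2 + t - 4 * w ^ 2) * A t * C t
        - (u' t + 2 * w * u t) * B t * C t - (u' t - 2 * w * u t) * A t * D t)
      (A x * C x + 2 * u x * u' x * (A x * C x - B x * D x)) x := by
  have hcoeff := (((hu.pow 2).const_mul 2).add (hasDerivAt_id x)).sub_const (4 * w ^ 2)
  refine (((hcoeff.mul hA).mul hC).sub (((hu'.add (hu.const_mul (2 * w))).mul hB).mul hC)
    |>.sub (((hu'.sub (hu.const_mul (2 * w))).mul hA).mul hD)).congr_deriv ?_
  simp only [Pi.add_apply, Pi.sub_apply, Pi.mul_apply, Pi.pow_apply, id]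
  ring

theorem painleveII_y_deriv_x_one_general
    (u : ℝ → ℝ) (a b y : ℝ → ℝ → ℝ)
    (hu : ContDiff ℝ (⊤ : ℕ∞) u)
    (hP2 : ∀ x : ℝ, deriv (deriv u) x = 2 * u x ^ 3 + x * u x)
    (ha : ContDiff ℝ (⊤ : ℕ∞) (fun p : ℝ × ℝ => a p.1 p.2))
    (hb : ContDiff ℝ (⊤ : ℕ∞) (fun p : ℝ × ℝ => b p.1 p.2))
    (hax : ∀ x w : ℝ, deriv (fun x' => a x' w) x = u x * b x w)
    (hbx : ∀ x w : ℝ, deriv (fun x' => b x' w) x = u x * a x w - 2 * w * b x w)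
    (hab : ∀ x w : ℝ, a x w = -b x (-w) * Real.exp (8 * w ^ 3 / 3 - 2 * w * x))
    (hy : ∀ x w : ℝ, y x w
      = (2 * u x ^ 2 + x - 4 * w ^ 2) * a x w * a x (-w)
        - (deriv u x + 2 * w * u x) * b x w * a x (-w)
        - (deriv u x - 2 * w * u x) * a x w * b x (-w)) :
    ∀ x w : ℝ, deriv (fun x' => y x' w) x = a x w * a x (-w) := by
  intro x w
  have hu₁ : Differentiable ℝ u := hu.differentiable (by simp)
  have hu₂ : Differentiable ℝ (deriv u) := (hu.iterate_deriv 1).differentiable (by simp)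
  have hA (v : ℝ) : HasDerivAt (fun t => a t v) (u x * b x v) x :=
    hax x v ▸ ((ha.differentiable (by simp)).apply_left v x).hasDerivAt
  have hB (v : ℝ) : HasDerivAt (fun t => b t v) (u x * a x v - 2 * v * b x v) x :=
    hbx x v ▸ ((hb.differentiable (by simp)).apply_left v x).hasDerivAt
  have hsymm : a x w * a x (-w) = b x w * b x (-w) :=
    mul_apply_neg_eq_of_eq_neg_mul_exp (fun v => by ring) (hab x) w
  rw [funext fun t => hy t w, (hasDerivAt_painleveII_y (hu₁ x).hasDerivAt
    (hP2 x ▸ (hu₂ x).hasDerivAt) (hA w) (hB w) (hA (-w)) (hB (-w))).deriv, hsymm]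
  ring

/-- first x-derivative of y in the Painlevé II system: ∂ₓy = a(x,w)·a(x,−w). -/
theorem painleveII_y_deriv_x_one
    (u : ℝ → ℝ) (a b y : ℝ → ℝ → ℝ)
    (hu : ContDiff ℝ (⊤ : ℕ∞) u)
    (hP2 : ∀ x : ℝ, deriv (deriv u) x = 2 * u x ^ 3 + x * u x)
    (ha : ContDiff ℝ (⊤ : ℕ∞) (fun p : ℝ × ℝ => a p.1 p.2))
    (hb : ContDiff ℝ (⊤ : ℕ∞) (fun p : ℝ × ℝ => b p.1 p.2))
    (hax : ∀ x w : ℝ, deriv (fun x' => a x' w) x = u x * b x w)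
    (hbx : ∀ x w : ℝ, deriv (fun x' => b x' w) x = u x * a x w - 2 * w * b x w)
    (haw : ∀ x w : ℝ, deriv (fun w' => a x w') w
      = 2 * u x ^ 2 * a x w - (4 * w * u x + 2 * deriv u x) * b x w)
    (hbw : ∀ x w : ℝ, deriv (fun w' => b x w') w
      = (-(4 * w * u x) + 2 * deriv u x) * a x w
        + (8 * w ^ 2 - 2 * x - 2 * u x ^ 2) * b x w)
    (hab : ∀ x w : ℝ, a x w = -b x (-w) * Real.exp (8 * w ^ 3 / 3 - 2 * w * x))
    (hba : ∀ x w : ℝ, b x w = -a x (-w) * Real.exp (8 * w ^ 3 / 3 - 2 * w * x))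
    (hy : ∀ x w : ℝ, y x w
      = (2 * u x ^ 2 + x - 4 * w ^ 2) * a x w * a x (-w)
        - (deriv u x + 2 * w * u x) * b x w * a x (-w)
        - (deriv u x - 2 * w * u x) * a x w * b x (-w)) :
    ∀ x w : ℝ, deriv (fun x' => y x' w) x = a x w * a x (-w) :=
  painleveII_y_deriv_x_one_general u a b y hu hP2 ha hb hax hbx hab hy
end

section
/- Let u, a, b, y be as in the Painlevé II system below. Then for all (x,w) ∈ ℝ × ℝ: ∂_w y(x,w) = −8w·a(x,w)·a(x,−w) + 2·u(x)·a(x,w)·b(x,−w) − 2·u(x)·b(x,w)·a(x,−w). -/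
/-! At fixed `x` the `w`-equations form a linear system for `(a(x,·), b(x,·))` with constant
coefficients `u(x)`, `u'(x)`. Differentiating `y` by the product rule and substituting this system
at `w` and at `-w`, all terms in which `a` or `b` is differentiated cancel; what remains are the
derivatives of the polynomial coefficients of `y`. -/

theorem Differentiable.uncurry_right {f : ℝ → ℝ → ℝ}
    (hf : Differentiable ℝ (fun p : ℝ × ℝ => f p.1 p.2)) (x : ℝ) : Differentiable ℝ (f x) :=
  hf.comp ((differentiable_const x).prodMk differentiable_id)

/-- The `w`-equations of the Painlevé II Lax pair at a fixed `x`, with `p = u(x)` and `q = u'(x)`. -/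
theorem hasDerivAt_painleveII_y_of_lax_w {A B : ℝ → ℝ} (p q x : ℝ)
    (hA : ∀ w, HasDerivAt A (2 * p ^ 2 * A w - (4 * w * p + 2 * q) * B w) w)
    (hB : ∀ w, HasDerivAt B ((-(4 * w * p) + 2 * q) * A w
      + (8 * w ^ 2 - 2 * x - 2 * p ^ 2) * B w) w) (w : ℝ) :
    HasDerivAt (fun w' => (2 * p ^ 2 + x - 4 * w' ^ 2) * A w' * A (-w')
        - (q + 2 * w' * p) * B w' * A (-w') - (q - 2 * w' * p) * A w' * B (-w'))
      (-(8 * w) * A w * A (-w) + 2 * p * A w * B (-w) - 2 * p * B w * A (-w)) w := by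
  have hAneg := (hA (-w)).comp w (hasDerivAt_neg w)
  have hBneg := (hB (-w)).comp w (hasDerivAt_neg w)
  have hc₁ : HasDerivAt (fun w' : ℝ => 2 * p ^ 2 + x - 4 * w' ^ 2) (-(8 * w)) w :=
    (((hasDerivAt_pow 2 w).const_mul 4).const_sub (2 * p ^ 2 + x)).congr_deriv (by norm_num; ring)
  have hc₂ : HasDerivAt (fun w' : ℝ => q + 2 * w' * p) (2 * p) w := by
    simpa using (((hasDerivAt_id w).const_mul 2).mul_const p).const_add q
  have hc₃ : HasDerivAt (fun w' : ℝ => q - 2 * w' * p) (-(2 * p)) w := by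
    simpa using (((hasDerivAt_id w).const_mul 2).mul_const p).const_sub q
  refine ((((hc₁.mul (hA w)).mul hAneg).sub ((hc₂.mul (hB w)).mul hAneg)).sub
    ((hc₃.mul (hA w)).mul hBneg)).congr_deriv ?_
  simp only [Pi.mul_apply, Function.comp_apply]
  ring

theorem painleveII_y_deriv_w_one_general
    (u : ℝ → ℝ) (a b y : ℝ → ℝ → ℝ)
    (ha : ContDiff ℝ (⊤ : ℕ∞) (fun p : ℝ × ℝ => a p.1 p.2))
    (hb : ContDiff ℝ (⊤ : ℕ∞) (fun p : ℝ × ℝ => b p.1 p.2))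
    (haw : ∀ x w : ℝ, deriv (fun w' => a x w') w
      = 2 * u x ^ 2 * a x w - (4 * w * u x + 2 * deriv u x) * b x w)
    (hbw : ∀ x w : ℝ, deriv (fun w' => b x w') w
      = (-(4 * w * u x) + 2 * deriv u x) * a x w
        + (8 * w ^ 2 - 2 * x - 2 * u x ^ 2) * b x w)
    (hy : ∀ x w : ℝ, y x w
      = (2 * u x ^ 2 + x - 4 * w ^ 2) * a x w * a x (-w)
        - (deriv u x + 2 * w * u x) * b x w * a x (-w)
        - (deriv u x - 2 * w * u x) * a x w * b x (-w)) :
    ∀ x w : ℝ, deriv (fun w' => y x w') w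
      = -(8 * w) * a x w * a x (-w) + 2 * u x * a x w * b x (-w)
        - 2 * u x * b x w * a x (-w) := by
  intro x w
  have hA : ∀ w, HasDerivAt (a x) _ w := fun w =>
    haw x w ▸ ((ha.differentiable (by simp)).uncurry_right x w).hasDerivAt
  have hB : ∀ w, HasDerivAt (b x) _ w := fun w =>
    hbw x w ▸ ((hb.differentiable (by simp)).uncurry_right x w).hasDerivAt
  rw [show (fun w' => y x w') = _ from funext (hy x)]
  exact (hasDerivAt_painleveII_y_of_lax_w (u x) (deriv u x) x hA hB w).deriv

/-- first w-derivative of y in the Painlevé II system. -/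
theorem painleveII_y_deriv_w_one
    (u : ℝ → ℝ) (a b y : ℝ → ℝ → ℝ)
    (hu : ContDiff ℝ (⊤ : ℕ∞) u)
    (hP2 : ∀ x : ℝ, deriv (deriv u) x = 2 * u x ^ 3 + x * u x)
    (ha : ContDiff ℝ (⊤ : ℕ∞) (fun p : ℝ × ℝ => a p.1 p.2))
    (hb : ContDiff ℝ (⊤ : ℕ∞) (fun p : ℝ × ℝ => b p.1 p.2))
    (hax : ∀ x w : ℝ, deriv (fun x' => a x' w) x = u x * b x w)
    (hbx : ∀ x w : ℝ, deriv (fun x' => b x' w) x = u x * a x w - 2 * w * b x w)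
    (haw : ∀ x w : ℝ, deriv (fun w' => a x w') w
      = 2 * u x ^ 2 * a x w - (4 * w * u x + 2 * deriv u x) * b x w)
    (hbw : ∀ x w : ℝ, deriv (fun w' => b x w') w
      = (-(4 * w * u x) + 2 * deriv u x) * a x w
        + (8 * w ^ 2 - 2 * x - 2 * u x ^ 2) * b x w)
    (hab : ∀ x w : ℝ, a x w = -b x (-w) * Real.exp (8 * w ^ 3 / 3 - 2 * w * x))
    (hba : ∀ x w : ℝ, b x w = -a x (-w) * Real.exp (8 * w ^ 3 / 3 - 2 * w * x))
    (hy : ∀ x w : ℝ, y x w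
      = (2 * u x ^ 2 + x - 4 * w ^ 2) * a x w * a x (-w)
        - (deriv u x + 2 * w * u x) * b x w * a x (-w)
        - (deriv u x - 2 * w * u x) * a x w * b x (-w)) :
    ∀ x w : ℝ, deriv (fun w' => y x w') w
      = -(8 * w) * a x w * a x (-w) + 2 * u x * a x w * b x (-w)
        - 2 * u x * b x w * a x (-w) :=
  painleveII_y_deriv_w_one_general u a b y ha hb haw hbw hy
end
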